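/- The category M of non-degenerate semigroups with multiplication in Q and dense multiplicative M-morphisms is a monoidal category: the tensor product of objects is the usual tensor product of semigroups (with multiplication (m⊗m')∘(1⊗c⊗1)), the tensor product of morphisms is given componentwise by (f₁⊗f'₁)∘(1⊗c⊗1) and (f₂⊗f'₂)∘(1⊗c⊗1), the unit is I, and the associativity and unit constraints are inherited from C. In particular the tensor product is functorial: (g∙f)⊗(g'∙f') = (g⊗g')∙(f⊗f'). -/

import Mathlib

open CategoryTheory Category MonoidalCategory Limits

universe v u

variable {C : Type u} [Category.{v} C] [MonoidalCategory C]

/-- A semigroup multiplication is non-degenerate. -/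
def NonDeg (A : C) (m : A ⊗ A ⟶ A) : Prop :=
  (∀ X Y : C, Function.Injective (fun f : X ⟶ Y ⊗ A =>
      (f ▷ A) ≫ (α_ Y A A).hom ≫ (Y ◁ m))) ∧
  (∀ X Y : C, Function.Injective (fun g : X ⟶ A ⊗ Y =>
      (A ◁ g) ≫ (α_ A A Y).inv ≫ (m ▷ Y)))

/-- Associativity of a semigroup multiplication. -/
def SgAssoc (A : C) (m : A ⊗ A ⟶ A) : Prop :=
  (m ▷ A) ≫ m = (α_ A A A).hom ≫ (A ◁ m) ≫ m

/-- A pair (f₁, f₂) is an `𝕄`-morphism `A ⇸ B`: eq. (2). -/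
def IsMMor {A B : C} (mB : B ⊗ B ⟶ B) (f₁ : A ⊗ B ⟶ B) (f₂ : B ⊗ A ⟶ B) : Prop :=
  (f₂ ▷ B) ≫ mB = (α_ B A B).hom ≫ (B ◁ f₁) ≫ mB

/-- The first component of an `𝕄`-morphism is multiplicative. -/
def Mult₁ {A B : C} (mA : A ⊗ A ⟶ A) (f₁ : A ⊗ B ⟶ B) : Prop :=
  (mA ▷ B) ≫ f₁ = (α_ A A B).hom ≫ (A ◁ f₁) ≫ f₁

/-- The second component of an `𝕄`-morphism is multiplicative. -/
def Mult₂ {A B : C} (mA : A ⊗ A ⟶ A) (f₂ : B ⊗ A ⟶ B) : Prop :=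
  (α_ B A A).hom ≫ (B ◁ mA) ≫ f₂ = (f₂ ▷ A) ≫ f₂

/-- The standing assumptions on the class `Q` of regular epimorphisms. -/
structure QData (C : Type u) [Category.{v} C] [MonoidalCategory C] where
  Q : MorphismProperty C
  regEpi : ∀ ⦃X Y : C⦄ (f : X ⟶ Y), Q f → Nonempty (RegularEpi f)
  comp_mem : ∀ ⦃X Y Z : C⦄ (f : X ⟶ Y) (g : Y ⟶ Z), Q f → Q g → Q (f ≫ g)
  tensor_mem : ∀ ⦃X Y X' Y' : C⦄ (f : X ⟶ Y) (g : X' ⟶ Y'), Q f → Q g → Q (f ⊗ₘ g)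
  iso_mem : ∀ ⦃X Y : C⦄ (f : X ⟶ Y), IsIso f → Q f
  cancel : ∀ ⦃X Y Z : C⦄ (s : X ⟶ Y) (t : Y ⟶ Z), Q s → Q (s ≫ t) → Q t
  coeq : ∀ ⦃X Y : C⦄ (f : X ⟶ Y), Q f →
    ∃ (Z : C) (u v : Z ⟶ X) (h : u ≫ f = v ≫ f),
      Nonempty (IsColimit (Cofork.ofπ f h)) ∧
      (∀ W : C, Nonempty (IsColimit (Cofork.ofπ (f := W ◁ u) (g := W ◁ v) (W ◁ f)
        (by rw [← MonoidalCategory.whiskerLeft_comp, ← MonoidalCategory.whiskerLeft_comp, h])))) ∧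
      (∀ W : C, Nonempty (IsColimit (Cofork.ofπ (f := u ▷ W) (g := v ▷ W) (f ▷ W)
        (by rw [← MonoidalCategory.comp_whiskerRight, ← MonoidalCategory.comp_whiskerRight, h]))))

/-- An object of the category `ℳ`: a non-degenerate semigroup with multiplication in `Q`. -/
structure MObj {C : Type u} [Category.{v} C] [MonoidalCategory C] (QD : QData C) where
  A : C
  m : A ⊗ A ⟶ A
  assoc : SgAssoc A m
  nondeg : NonDeg A m
  mQ : QD.Q m

/-- A morphism of the category `ℳ`: a dense multiplicative `𝕄`-morphism. -/
@[ext]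
structure MHom {C : Type u} [Category.{v} C] [MonoidalCategory C] {QD : QData C}
    (X Y : MObj QD) where
  f₁ : X.A ⊗ Y.A ⟶ Y.A
  f₂ : Y.A ⊗ X.A ⟶ Y.A
  compat : IsMMor Y.m f₁ f₂
  mult₁ : Mult₁ X.m f₁
  mult₂ : Mult₂ X.m f₂
  dense₁ : QD.Q f₁
  dense₂ : QD.Q f₂

/-- The identity `𝕄`-morphism `i = (m, m)`. -/
def MObj.idM {QD : QData C} (X : MObj QD) : MHom X X where
  f₁ := X.m
  f₂ := X.m
  compat := X.assoc
  mult₁ := X.assoc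
  mult₂ := X.assoc.symm
  dense₁ := X.mQ
  dense₂ := X.mQ

/-- The monoidal unit with its trivial multiplication, as an object of `ℳ`. -/
def MObj.unit (QD : QData C) : MObj QD where
  A := 𝟙_ C
  m := (λ_ (𝟙_ C)).hom
  assoc := by
    dsimp [SgAssoc]
    monoidal
  nondeg := by
    constructor
    · intro X Y f g h
      have h' : f ▷ 𝟙_ C = g ▷ 𝟙_ C := by
        have this := h
        dsimp at this
        simp only [← Category.assoc] at this
        rw [cancel_mono] at this
        rwa [cancel_mono] at this
      rwa [MonoidalCategory.whiskerRight_id, MonoidalCategory.whiskerRight_id,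
        cancel_epi, cancel_mono] at h'
    · intro X Y f g h
      have h' : 𝟙_ C ◁ f = 𝟙_ C ◁ g := by
        have this := h
        dsimp at this
        simp only [← Category.assoc] at this
        rw [cancel_mono] at this
        rwa [cancel_mono] at this
      rwa [MonoidalCategory.id_whiskerLeft, MonoidalCategory.id_whiskerLeft,
        cancel_epi, cancel_mono] at h'
  mQ := QD.iso_mem _ inferInstance

/-!
All axioms of `ℳ` — associativity, the `𝕄`-morphism condition, multiplicativity of both
components, and the equations defining the composite `g ∙ f` — are instances of one
"associativity square" `(s ▷ Z) ≫ t = α ≫ (X ◁ u) ≫ v`. Tensoring two such squares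
componentwise, after the middle interchange `tensorμ`, gives again such a square, by naturality
of `tensorμ` and its compatibility with the associator; this yields everything except
non-degeneracy. Non-degeneracy of `m ⊗ m'` factors, up to associators and braidings, as
non-degeneracy of `m` followed by that of `m'`. Membership in `Q` holds because `tensorμ` is
invertible and `Q` is closed under tensor products and composition.
-/

section Twisted

variable {C : Type u} [Category.{v} C] [MonoidalCategory C]

def AssocSquare {X Y Z T S W : C} (s : X ⊗ Y ⟶ T) (t : T ⊗ Z ⟶ W) (u : Y ⊗ Z ⟶ S)
    (v : X ⊗ S ⟶ W) : Prop :=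
  (s ▷ Z) ≫ t = (α_ X Y Z).hom ≫ (X ◁ u) ≫ v

variable [BraidedCategory C]

/-- The paper's `(s ⊗ s') ∘ (1 ⊗ c ⊗ 1)`. -/
def tensorTwist {X X' Y Y' T T' : C} (s : X ⊗ Y ⟶ T) (s' : X' ⊗ Y' ⟶ T') :
    (X ⊗ X') ⊗ (Y ⊗ Y') ⟶ T ⊗ T' :=
  tensorμ X X' Y Y' ≫ (s ⊗ₘ s')

theorem AssocSquare.tensorTwist {X X' Y Y' Z Z' T T' S S' W W' : C}
    {s : X ⊗ Y ⟶ T} {t : T ⊗ Z ⟶ W} {u : Y ⊗ Z ⟶ S} {v : X ⊗ S ⟶ W}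
    {s' : X' ⊗ Y' ⟶ T'} {t' : T' ⊗ Z' ⟶ W'} {u' : Y' ⊗ Z' ⟶ S'} {v' : X' ⊗ S' ⟶ W'}
    (h : AssocSquare s t u v) (h' : AssocSquare s' t' u' v') :
    AssocSquare (tensorTwist s s') (tensorTwist t t') (tensorTwist u u') (tensorTwist v v') := by
  simp only [AssocSquare, _root_.tensorTwist, comp_whiskerRight_assoc,
    MonoidalCategory.whiskerLeft_comp_assoc]
  slice_lhs 2 3 => rw [tensorμ_natural_left]
  slice_lhs 3 4 =>
    rw [tensorHom_comp_tensorHom, h, h', ← tensorHom_comp_tensorHom, ← tensorHom_comp_tensorHom]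
  slice_lhs 1 3 => rw [tensor_associativity]
  slice_lhs 3 4 => rw [← tensorμ_natural_right]
  simp

theorem QData.tensorTwist_mem (QD : QData C) {X X' Y Y' T T' : C}
    {s : X ⊗ Y ⟶ T} {s' : X' ⊗ Y' ⟶ T'} (hs : QD.Q s) (hs' : QD.Q s') :
    QD.Q (tensorTwist s s') :=
  QD.comp_mem _ _ (QD.iso_mem _ ⟨tensorδ _ _ _ _, by simp, by simp⟩) (QD.tensor_mem _ _ hs hs')

end Twisted

section Nondegeneracy

variable {C : Type u} [Category.{v} C] [MonoidalCategory C]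

def rightMul {A : C} (m : A ⊗ A ⟶ A) {X Y : C} (f : X ⟶ Y ⊗ A) : X ⊗ A ⟶ Y ⊗ A :=
  (f ▷ A) ≫ (α_ Y A A).hom ≫ (Y ◁ m)

def leftMul {A : C} (m : A ⊗ A ⟶ A) {X Y : C} (g : X ⟶ A ⊗ Y) : A ⊗ X ⟶ A ⊗ Y :=
  (A ◁ g) ≫ (α_ A A Y).inv ≫ (m ▷ Y)

theorem NonDeg.rightMul_injective {A : C} {m : A ⊗ A ⟶ A} (hm : NonDeg A m) (X Y : C) :
    Function.Injective (rightMul m : (X ⟶ Y ⊗ A) → _) :=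
  fun _ _ h => hm.1 X Y h

theorem NonDeg.leftMul_injective {A : C} {m : A ⊗ A ⟶ A} (hm : NonDeg A m) (X Y : C) :
    Function.Injective (leftMul m : (X ⟶ A ⊗ Y) → _) :=
  fun _ _ h => hm.2 X Y h

variable [BraidedCategory C] {A A' : C} (m : A ⊗ A ⟶ A) (m' : A' ⊗ A' ⟶ A')

theorem rightMul_tensorTwist {X Y : C} (f : X ⟶ Y ⊗ (A ⊗ A')) :
    rightMul (tensorTwist m m') f = (α_ X A A').inv ≫
      rightMul m' (rightMul m (f ≫ (Y ◁ (β_ A' A).inv) ≫ (α_ Y A' A).inv) ≫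
        (α_ Y A' A).hom ≫ (Y ◁ (β_ A' A).hom) ≫ (α_ Y A A').inv) ≫ (α_ Y A A').hom := by
  have braid_mul : ((β_ A' A).inv ▷ A) ≫ (α_ A' A A).hom ≫ (A' ◁ m) ≫ (β_ A' A).hom
      = (α_ A A' A).hom ≫ (A ◁ (β_ A' A).hom) ≫ (α_ A A A').inv ≫ (m ▷ A') := by
    slice_lhs 3 4 => rw [BraidedCategory.braiding_naturality_right]
    rw [BraidedCategory.braiding_tensor_right_hom]
    simp
  have inner : rightMul m (f ≫ (Y ◁ (β_ A' A).inv) ≫ (α_ Y A' A).inv) ≫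
      (α_ Y A' A).hom ≫ (Y ◁ (β_ A' A).hom) ≫ (α_ Y A A').inv = (f ▷ A) ≫
        (α_ Y (A ⊗ A') A).hom ≫ (Y ◁ ((α_ A A' A).hom ≫ (A ◁ (β_ A' A).hom) ≫
          (α_ A A A').inv ≫ (m ▷ A'))) ≫ (α_ Y A A').inv := by
    rw [← braid_mul, rightMul]
    monoidal
  rw [inner, rightMul, rightMul, tensorTwist, tensorμ, MonoidalCategory.tensorHom_def]
  monoidal

theorem leftMul_tensorTwist {X Y : C} (g : X ⟶ (A ⊗ A') ⊗ Y) :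
    leftMul (tensorTwist m m') g = (α_ A A' X).hom ≫
      leftMul m (leftMul m' (g ≫ ((β_ A' A).inv ▷ Y) ≫ (α_ A' A Y).hom) ≫
        (α_ A' A Y).inv ≫ ((β_ A' A).hom ▷ Y) ≫ (α_ A A' Y).hom) ≫ (α_ A A' Y).inv := by
  have braid_mul : (A' ◁ (β_ A' A).inv) ≫ (α_ A' A' A).inv ≫ (m' ▷ A) ≫ (β_ A' A).hom
      = (α_ A' A A').inv ≫ ((β_ A' A).hom ▷ A') ≫ (α_ A A' A').hom ≫ (A ◁ m') := by
    slice_lhs 3 4 => rw [BraidedCategory.braiding_naturality_left]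
    rw [BraidedCategory.braiding_tensor_left_hom]
    simp
  have inner : leftMul m' (g ≫ ((β_ A' A).inv ▷ Y) ≫ (α_ A' A Y).hom) ≫
      (α_ A' A Y).inv ≫ ((β_ A' A).hom ▷ Y) ≫ (α_ A A' Y).hom = (A' ◁ g) ≫
        (α_ A' (A ⊗ A') Y).inv ≫ (((α_ A' A A').inv ≫ ((β_ A' A).hom ▷ A') ≫
          (α_ A A' A').hom ≫ (A ◁ m')) ▷ Y) ≫ (α_ A A' Y).hom := by
    rw [← braid_mul, leftMul]
    monoidal
  rw [inner, leftMul, leftMul, tensorTwist, tensorμ, MonoidalCategory.tensorHom_def']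
  monoidal

variable {m m'}

theorem NonDeg.tensorTwist (hm : NonDeg A m) (hm' : NonDeg A' m') :
    NonDeg (A ⊗ A') (tensorTwist m m') := by
  constructor
  · intro X Y f g hfg
    change rightMul _ f = rightMul _ g at hfg
    rw [rightMul_tensorTwist, rightMul_tensorTwist, cancel_epi, cancel_mono] at hfg
    have h := hm'.rightMul_injective _ _ hfg
    rw [cancel_mono] at h
    exact (cancel_mono _).1 (hm.rightMul_injective _ _ h)
  · intro X Y f g hfg
    change leftMul _ f = leftMul _ g at hfg
    rw [leftMul_tensorTwist, leftMul_tensorTwist, cancel_epi, cancel_mono] at hfg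
    have h := hm.leftMul_injective _ _ hfg
    rw [cancel_mono] at h
    exact (cancel_mono _).1 (hm'.leftMul_injective _ _ h)

end Nondegeneracy

/-- Proposition 4.3: the category `ℳ` is monoidal: the tensor product of objects is the
usual tensor product of semigroups (with multiplication `(m ⊗ m') ∘ (1 ⊗ c ⊗ 1)`), the
tensor product of morphisms is given componentwise by `(f₁ ⊗ f'₁) ∘ (1 ⊗ c ⊗ 1)` and
`(f₂ ⊗ f'₂) ∘ (1 ⊗ c ⊗ 1)`, the unit is `I`, the constraints are inherited from `C`,
and in particular the tensor product is functorial: `(g∙f) ⊗ (g'∙f') = (g⊗g') ∙ (f⊗f')`. -/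
theorem M_monoidal [BraidedCategory C] (QD : QData C) :
    -- tensor product of objects of ℳ is an object of ℳ
    (∀ X Y : MObj QD,
      SgAssoc (X.A ⊗ Y.A) (tensorμ X.A Y.A X.A Y.A ≫ (X.m ⊗ₘ Y.m)) ∧
      NonDeg (X.A ⊗ Y.A) (tensorμ X.A Y.A X.A Y.A ≫ (X.m ⊗ₘ Y.m)) ∧
      QD.Q (tensorμ X.A Y.A X.A Y.A ≫ (X.m ⊗ₘ Y.m))) ∧
    -- tensor product of morphisms of ℳ is a morphism of ℳ
    (∀ (X X' Y Y' : MObj QD) (f : MHom X Y) (f' : MHom X' Y'),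
      IsMMor (tensorμ Y.A Y'.A Y.A Y'.A ≫ (Y.m ⊗ₘ Y'.m))
        (tensorμ X.A X'.A Y.A Y'.A ≫ (f.f₁ ⊗ₘ f'.f₁))
        (tensorμ Y.A Y'.A X.A X'.A ≫ (f.f₂ ⊗ₘ f'.f₂)) ∧
      Mult₁ (tensorμ X.A X'.A X.A X'.A ≫ (X.m ⊗ₘ X'.m))
        (tensorμ X.A X'.A Y.A Y'.A ≫ (f.f₁ ⊗ₘ f'.f₁)) ∧
      Mult₂ (tensorμ X.A X'.A X.A X'.A ≫ (X.m ⊗ₘ X'.m))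
        (tensorμ Y.A Y'.A X.A X'.A ≫ (f.f₂ ⊗ₘ f'.f₂)) ∧
      QD.Q (tensorμ X.A X'.A Y.A Y'.A ≫ (f.f₁ ⊗ₘ f'.f₁)) ∧
      QD.Q (tensorμ Y.A Y'.A X.A X'.A ≫ (f.f₂ ⊗ₘ f'.f₂))) ∧
    -- tensor product preserves identities: `i_X ⊗ i_Y = i_{X ⊗ Y}` componentwise
    (∀ X Y : MObj QD,
      tensorμ X.A Y.A X.A Y.A ≫ (X.m ⊗ₘ Y.m) =
        tensorμ X.A Y.A X.A Y.A ≫ ((MObj.idM X).f₁ ⊗ₘ (MObj.idM Y).f₁)) ∧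
    -- functoriality: `(g ∙ f) ⊗ (g' ∙ f')` satisfies the defining equations
    -- of the composite `(g ⊗ g') ∙ (f ⊗ₘ f')`
    (∀ (X X' Y Y' Z Z' : MObj QD)
      (f : MHom X Y) (g : MHom Y Z) (f' : MHom X' Y') (g' : MHom Y' Z')
      (p₁ : X.A ⊗ Z.A ⟶ Z.A) (p₂ : Z.A ⊗ X.A ⟶ Z.A)
      (p'₁ : X'.A ⊗ Z'.A ⟶ Z'.A) (p'₂ : Z'.A ⊗ X'.A ⟶ Z'.A),
      -- `p = g ∙ f` and `p' = g' ∙ f'`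
      ((α_ X.A Y.A Z.A).hom ≫ (X.A ◁ g.f₁) ≫ p₁ = (f.f₁ ▷ Z.A) ≫ g.f₁) →
      ((g.f₂ ▷ X.A) ≫ p₂ = (α_ Z.A Y.A X.A).hom ≫ (Z.A ◁ f.f₂) ≫ g.f₂) →
      ((α_ X'.A Y'.A Z'.A).hom ≫ (X'.A ◁ g'.f₁) ≫ p'₁ = (f'.f₁ ▷ Z'.A) ≫ g'.f₁) →
      ((g'.f₂ ▷ X'.A) ≫ p'₂ = (α_ Z'.A Y'.A X'.A).hom ≫ (Z'.A ◁ f'.f₂) ≫ g'.f₂) →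
      ((α_ (X.A ⊗ X'.A) (Y.A ⊗ Y'.A) (Z.A ⊗ Z'.A)).hom ≫
          ((X.A ⊗ X'.A) ◁ (tensorμ Y.A Y'.A Z.A Z'.A ≫ (g.f₁ ⊗ₘ g'.f₁))) ≫
          (tensorμ X.A X'.A Z.A Z'.A ≫ (p₁ ⊗ₘ p'₁)) =
        ((tensorμ X.A X'.A Y.A Y'.A ≫ (f.f₁ ⊗ₘ f'.f₁)) ▷ (Z.A ⊗ Z'.A)) ≫
          (tensorμ Y.A Y'.A Z.A Z'.A ≫ (g.f₁ ⊗ₘ g'.f₁))) ∧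
      (((tensorμ Z.A Z'.A Y.A Y'.A ≫ (g.f₂ ⊗ₘ g'.f₂)) ▷ (X.A ⊗ X'.A)) ≫
          (tensorμ Z.A Z'.A X.A X'.A ≫ (p₂ ⊗ₘ p'₂)) =
        (α_ (Z.A ⊗ Z'.A) (Y.A ⊗ Y'.A) (X.A ⊗ X'.A)).hom ≫
          ((Z.A ⊗ Z'.A) ◁ (tensorμ Y.A Y'.A X.A X'.A ≫ (f.f₂ ⊗ₘ f'.f₂))) ≫
          (tensorμ Z.A Z'.A Y.A Y'.A ≫ (g.f₂ ⊗ₘ g'.f₂)))) := by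
  refine ⟨fun X Y => ⟨AssocSquare.tensorTwist X.assoc Y.assoc, X.nondeg.tensorTwist Y.nondeg,
      QD.tensorTwist_mem X.mQ Y.mQ⟩,
    fun X X' Y Y' f f' => ⟨AssocSquare.tensorTwist f.compat f'.compat,
      AssocSquare.tensorTwist f.mult₁ f'.mult₁,
      (AssocSquare.tensorTwist f.mult₂.symm f'.mult₂.symm).symm,
      QD.tensorTwist_mem f.dense₁ f'.dense₁, QD.tensorTwist_mem f.dense₂ f'.dense₂⟩,
    fun _ _ => rfl,
    fun X X' Y Y' Z Z' f g f' g' p₁ p₂ p'₁ p'₂ hp₁ hp₂ hp'₁ hp'₂ =>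
      ⟨(AssocSquare.tensorTwist hp₁.symm hp'₁.symm).symm, AssocSquare.tensorTwist hp₂ hp'₂⟩⟩
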